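/- arXiv:math/0601499 — 2 statements merged into one kernel-verified Lean document; each statement's English description precedes it below -/
import Mathlib

section
/- Let n ≥ 4, let k ∈ {2, …, n−2}, and let b > 0 be a real number. Let x₁, …, x_{n−1}, y₁, …, y_{n−1} be nonnegative real numbers satisfying xᵢ + yᵢ = 2 for all i = 1, …, n−1, and ∏_{i∈I} xᵢ + ∏_{i∈I} yᵢ = 2b for every subset I ⊆ {1, …, n−1} with |I| = k. Then the set {x₁, …, x_{n−1}} has at most 2 elements, and the set {y₁, …, y_{n−1}} has at most 2 elements. -/
/-! Suppose `x` took three distinct values, at indices `i₁, i₂, i₃`. Completing each pair `{iₐ, i_b}`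
by one and the same `(k - 2)`-set `T` of other indices, the hypothesis reads
`x_a x_b P + y_a y_b Q = d` with `P = x_T`, `Q = y_T`. Subtracting these three equations and using
`x + y = c` forces `x_a P = y_a Q` for all `a`, then `P + Q = 0`, hence `P = Q = 0` and `d = 0`. -/

open Finset

theorem eq_zero_of_mul_mul_add_mul_mul_eq {K : Type*} [Field K] {c d P Q x₁ x₂ x₃ y₁ y₂ y₃ : K}
    (hc : c ≠ 0) (h₁ : x₁ + y₁ = c) (h₂ : x₂ + y₂ = c) (h₃ : x₃ + y₃ = c)
    (h₁₂ : x₁ ≠ x₂) (h₁₃ : x₁ ≠ x₃) (h₂₃ : x₂ ≠ x₃)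
    (e₁₂ : x₁ * x₂ * P + y₁ * y₂ * Q = d) (e₁₃ : x₁ * x₃ * P + y₁ * y₃ * Q = d)
    (e₂₃ : x₂ * x₃ * P + y₂ * y₃ * Q = d) : d = 0 := by
  have hP₁ : x₁ * P = y₁ * Q := mul_left_cancel₀ (sub_ne_zero.2 h₂₃) <| by
    linear_combination e₁₂ - e₁₃ - y₁ * Q * (h₂ - h₃)
  have hP₂ : x₂ * P = y₂ * Q := mul_left_cancel₀ (sub_ne_zero.2 h₁₃) <| by
    linear_combination e₁₂ - e₂₃ - y₂ * Q * (h₁ - h₃)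
  have hPQ : P + Q = 0 := mul_left_cancel₀ (sub_ne_zero.2 h₁₂) <| by
    linear_combination hP₁ - hP₂ + Q * (h₁ - h₂)
  have hP : P = 0 := mul_left_cancel₀ hc <| by
    linear_combination hP₁ + y₁ * hPQ - P * h₁
  have hQ : Q = 0 := by linear_combination hPQ - hP
  linear_combination -e₁₂ + x₁ * x₂ * hP + y₁ * y₂ * hQ

theorem mul_mul_prod_add_mul_mul_prod_eq {ι K : Type*} [CommRing K] {k : ℕ} {d : K} {x y : ι → K}
    (hprod : ∀ I : Finset ι, #I = k → ∏ i ∈ I, x i + ∏ i ∈ I, y i = d)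
    {T : Finset ι} (hT : #T + 2 = k) {p q : ι} (hp : p ∉ T) (hq : q ∉ T) (hpq : p ≠ q) :
    x p * x q * ∏ i ∈ T, x i + y p * y q * ∏ i ∈ T, y i = d := by
  classical
  have hpT : p ∉ insert q T := by simp [hpq, hp]
  have h := hprod (insert p (insert q T)) <| by
    rw [card_insert_of_notMem hpT, card_insert_of_notMem hq, ← hT]
  simpa only [prod_insert hpT, prod_insert hq, mul_assoc] using h

theorem card_image_le_two_of_prod_add_prod_eq {ι K : Type*} [Fintype ι] [Field K] [DecidableEq K]
    {k : ℕ} (hk : 2 ≤ k) (hkι : k < Fintype.card ι) {c d : K} (hc : c ≠ 0) (hd : d ≠ 0)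
    {x y : ι → K} (hsum : ∀ i, x i + y i = c)
    (hprod : ∀ I : Finset ι, #I = k → ∏ i ∈ I, x i + ∏ i ∈ I, y i = d) :
    #(univ.image x) ≤ 2 := by
  classical
  by_contra! h
  obtain ⟨_, _, _, h₁, h₂, h₃, h₁₂, h₁₃, h₂₃⟩ := two_lt_card_iff.1 h
  obtain ⟨i₁, -, rfl⟩ := mem_image.1 h₁
  obtain ⟨i₂, -, rfl⟩ := mem_image.1 h₂
  obtain ⟨i₃, -, rfl⟩ := mem_image.1 h₃
  obtain ⟨T, hTS, hT⟩ := exists_subset_card_eq (s := ({i₁, i₂, i₃} : Finset ι)ᶜ) (n := k - 2) <| by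
    have := card_le_three (a := i₁) (b := i₂) (c := i₃)
    rw [card_compl]
    omega
  have hnot : ∀ i ∈ ({i₁, i₂, i₃} : Finset ι), i ∉ T := fun i hi hiT => mem_compl.1 (hTS hiT) hi
  have pair {p q : ι} (hp : p ∉ T) (hq : q ∉ T) (hpq : p ≠ q) :=
    mul_mul_prod_add_mul_mul_prod_eq hprod (by omega : #T + 2 = k) hp hq hpq
  exact hd <| eq_zero_of_mul_mul_add_mul_mul_eq hc (hsum i₁) (hsum i₂) (hsum i₃) h₁₂ h₁₃ h₂₃
    (pair (hnot _ (by simp)) (hnot _ (by simp)) (ne_of_apply_ne x h₁₂))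
    (pair (hnot _ (by simp)) (hnot _ (by simp)) (ne_of_apply_ne x h₁₃))
    (pair (hnot _ (by simp)) (hnot _ (by simp)) (ne_of_apply_ne x h₂₃))

theorem stmt2_general (n k : ℕ) (hk2 : 2 ≤ k) (hkn : k ≤ n - 2)
    (b : ℝ) (hb : 0 < b)
    (x y : Fin (n - 1) → ℝ)
    (hsum : ∀ i, x i + y i = 2)
    (hprod : ∀ I : Finset (Fin (n - 1)), I.card = k →
      (∏ i ∈ I, x i) + (∏ i ∈ I, y i) = 2 * b) :
    (Finset.univ.image x).card ≤ 2 ∧ (Finset.univ.image y).card ≤ 2 := by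
  have hkι : k < Fintype.card (Fin (n - 1)) := by rw [Fintype.card_fin]; omega
  have hd : 2 * b ≠ 0 := by positivity
  exact ⟨card_image_le_two_of_prod_add_prod_eq hk2 hkι two_ne_zero hd hsum hprod,
    card_image_le_two_of_prod_add_prod_eq hk2 hkι two_ne_zero hd
      (fun i => (add_comm _ _).trans (hsum i)) (fun I hI => (add_comm _ _).trans (hprod I hI))⟩

/-- Lemma: if nonnegative reals `x₁,…,x_{n-1}, y₁,…,y_{n-1}` satisfy `xᵢ + yᵢ = 2` and
`x_I + y_I = 2b` for all `I` of cardinality `k ∈ {2,…,n-2}`, then each of the families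
`x` and `y` takes at most two distinct values. -/
theorem stmt2 (n k : ℕ) (hn : 4 ≤ n) (hk2 : 2 ≤ k) (hkn : k ≤ n - 2)
    (b : ℝ) (hb : 0 < b)
    (x y : Fin (n - 1) → ℝ)
    (hx : ∀ i, 0 ≤ x i) (hy : ∀ i, 0 ≤ y i)
    (hsum : ∀ i, x i + y i = 2)
    (hprod : ∀ I : Finset (Fin (n - 1)), I.card = k →
      (∏ i ∈ I, x i) + (∏ i ∈ I, y i) = 2 * b) :
    (Finset.univ.image x).card ≤ 2 ∧ (Finset.univ.image y).card ≤ 2 :=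
  stmt2_general n k hk2 hkn b hb x y hsum hprod
end

section
/- Let n ≥ 4 and let b > 0 be a real number. Let x₁, …, x_{n−1}, y₁, …, y_{n−1} be nonnegative real numbers satisfying xᵢ + yᵢ = 2 for all i = 1, …, n−1, and ∏_{l∈I} x_l + ∏_{l∈I} y_l = 2b for every subset I ⊆ {1, …, n−1} with |I| = n−2. Then for any indices i, j ∈ {1, …, n−1} with xᵢ ≠ x_j, one has ∏_{l≠i,j} x_l = ∏_{l≠i,j} y_l = b, where the products run over all l ∈ {1, …, n−1} with l ≠ i and l ≠ j. -/
/-- Lemma: if nonnegative reals `x₁,…,x_{n-1}, y₁,…,y_{n-1}` satisfy `xᵢ + yᵢ = 2` and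
`x_I + y_I = 2b` for all `I` of cardinality `n-2`, then for indices `i, j` with
`xᵢ ≠ x_j` one has `∏_{l ≠ i,j} x_l = ∏_{l ≠ i,j} y_l = b`. -/
theorem stmt3 (n : ℕ) (hn : 4 ≤ n)
    (b : ℝ) (hb : 0 < b)
    (x y : Fin (n - 1) → ℝ)
    (hx : ∀ i, 0 ≤ x i) (hy : ∀ i, 0 ≤ y i)
    (hsum : ∀ i, x i + y i = 2)
    (hprod : ∀ I : Finset (Fin (n - 1)), I.card = n - 2 →
      (∏ l ∈ I, x l) + (∏ l ∈ I, y l) = 2 * b)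
    (i j : Fin (n - 1)) (hij : x i ≠ x j) :
    (∏ l ∈ Finset.univ \ {i, j}, x l) = b ∧ (∏ l ∈ Finset.univ \ {i, j}, y l) = b := by
  have hij' : i ≠ j := fun h => hij (by rw [h])
  have hcardj : (Finset.univ \ {j} : Finset (Fin (n - 1))).card = n - 2 := by
    rw [Finset.card_sdiff_of_subset (by simp), Finset.card_univ, Fintype.card_fin,
      Finset.card_singleton]
    omega
  have hcardi : (Finset.univ \ {i} : Finset (Fin (n - 1))).card = n - 2 := by
    rw [Finset.card_sdiff_of_subset (by simp), Finset.card_univ, Fintype.card_fin,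
      Finset.card_singleton]
    omega
  have h1 := hprod _ hcardj
  have h2 := hprod _ hcardi
  have hseti : (Finset.univ \ {j} : Finset (Fin (n - 1))) = insert i (Finset.univ \ {i, j}) := by
    ext l
    simp only [Finset.mem_sdiff, Finset.mem_univ, Finset.mem_singleton, Finset.mem_insert,
      true_and, not_or]
    constructor
    · intro h
      rcases eq_or_ne l i with rfl | h'
      · exact Or.inl rfl
      · exact Or.inr ⟨h', h⟩
    · rintro (rfl | ⟨_, h⟩)
      · exact hij'
      · exact h
  have hsetj : (Finset.univ \ {i} : Finset (Fin (n - 1))) = insert j (Finset.univ \ {i, j}) := by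
    ext l
    simp only [Finset.mem_sdiff, Finset.mem_univ, Finset.mem_singleton, Finset.mem_insert,
      true_and, not_or]
    constructor
    · intro h
      rcases eq_or_ne l j with rfl | h'
      · exact Or.inl rfl
      · exact Or.inr ⟨h, h'⟩
    · rintro (rfl | ⟨h, _⟩)
      · exact hij'.symm
      · exact h
  have hinotmem : i ∉ Finset.univ \ ({i, j} : Finset (Fin (n - 1))) := by simp
  have hjnotmem : j ∉ Finset.univ \ ({i, j} : Finset (Fin (n - 1))) := by simp
  set P := ∏ l ∈ Finset.univ \ ({i, j} : Finset (Fin (n - 1))), x l with hP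
  set Q := ∏ l ∈ Finset.univ \ ({i, j} : Finset (Fin (n - 1))), y l with hQ
  rw [hseti, Finset.prod_insert hinotmem, Finset.prod_insert hinotmem] at h1
  rw [hsetj, Finset.prod_insert hjnotmem, Finset.prod_insert hjnotmem] at h2
  -- h1 : x i * P + y i * Q = 2 * b, h2 : x j * P + y j * Q = 2 * b
  have key : (x i - x j) * (P - Q) = 0 := by
    linear_combination h1 - h2 - Q * hsum i + Q * hsum j
  have hPQ : P = Q := by
    rcases mul_eq_zero.mp key with h | h
    · exact absurd (sub_eq_zero.mp h) hij
    · linarith [sub_eq_zero.mp h]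
  have hPb : P = b := by
    have h1' : x i * P + y i * Q = 2 * b := h1
    rw [← hPQ] at h1'
    nlinarith [hsum i]
  exact ⟨hPb, hPQ ▸ hPb⟩
end
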